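/- Let n, r, s be positive integers with s dividing r·n and put m = r·n/s, and let q be a real number with q > 1. Then (q^{−n}; q)_s = q^{−nr} · ∑_{j=0}^{s} q^{j·m} · [s choose j]_q · (q^{−m}; q)_j · (q^{m−n}; q)_{s−j}. -/
import Mathlib


/-- The q-Pochhammer symbol `(a; q)_k = ∏_{i=0}^{k-1} (1 - a q^i)`. -/
noncomputable def qPoch (q a : ℝ) (k : ℕ) : ℝ :=
  ∏ i ∈ Finset.range k, (1 - a * q ^ i)

/-- The Gaussian binomial coefficient `[a choose b]_q`, which is
`∏_{i=0}^{b-1} (1 - q^{a-i})/(1 - q^{i+1})` for `b ≤ a` and `0` for `b > a`. -/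
noncomputable def qBinom (q : ℝ) (a b : ℕ) : ℝ :=
  if b ≤ a then ∏ i ∈ Finset.range b, (1 - q ^ (a - i)) / (1 - q ^ (i + 1)) else 0

/-- Numerator of the Gaussian binomial. -/
noncomputable def Qf (q : ℝ) (a b : ℕ) : ℝ :=
  ∏ i ∈ Finset.range b, (1 - q ^ (a - i))

lemma one_sub_pow_ne (q : ℝ) (hq : 1 < q) (k : ℕ) : (1 : ℝ) - q ^ (k + 1) ≠ 0 := by
  have : 1 < q ^ (k + 1) := one_lt_pow₀ hq (Nat.succ_ne_zero k)
  linarith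

lemma qD_ne (q : ℝ) (hq : 1 < q) (b : ℕ) :
    ∏ i ∈ Finset.range b, (1 - q ^ (i + 1)) ≠ 0 := by
  apply Finset.prod_ne_zero_iff.2
  intro i _
  exact one_sub_pow_ne q hq i

lemma Qf_eq_zero (q : ℝ) {a b : ℕ} (h : a < b) : Qf q a b = 0 := by
  apply Finset.prod_eq_zero (i := a) (Finset.mem_range.2 h)
  simp

lemma qBinom_eq (q : ℝ) (a b : ℕ) :
    qBinom q a b = Qf q a b / ∏ i ∈ Finset.range b, (1 - q ^ (i + 1)) := by
  unfold qBinom Qf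
  split
  · rw [Finset.prod_div_distrib]
  · rw [eq_comm, div_eq_zero_iff]
    left
    apply Finset.prod_eq_zero (i := a) (Finset.mem_range.2 (by omega))
    simp

lemma Qf_pascal (q : ℝ) (n k : ℕ) :
    Qf q (n + 1) (k + 1) = q ^ (k + 1) * Qf q n (k + 1) + Qf q n k * (1 - q ^ (k + 1)) := by
  have h1 : Qf q (n + 1) (k + 1) = (1 - q ^ (n + 1)) * Qf q n k := by
    unfold Qf
    rw [Finset.prod_range_succ']
    simp only [Nat.succ_sub_succ, Nat.sub_zero]
    ring
  rcases le_or_gt k n with h | h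
  · have h2 : Qf q n (k + 1) = Qf q n k * (1 - q ^ (n - k)) := Finset.prod_range_succ _ _
    have e5 : q ^ (k + 1) * q ^ (n - k) = q ^ (n + 1) := by
      rw [← pow_add]; congr 1; omega
    rw [h1, h2]
    linear_combination Qf q n k * e5
  · have hz : Qf q n k = 0 := Qf_eq_zero q h
    have hz2 : Qf q n (k + 1) = 0 := Qf_eq_zero q (by omega)
    rw [h1, hz, hz2]; ring

lemma qBinom_pascal (q : ℝ) (hq : 1 < q) (n k : ℕ) :
    qBinom q (n + 1) (k + 1) = q ^ (k + 1) * qBinom q n (k + 1) + qBinom q n k := by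
  have hD := qD_ne q hq k
  have hk1 := one_sub_pow_ne q hq k
  rw [qBinom_eq, qBinom_eq, qBinom_eq, Qf_pascal, Finset.prod_range_succ]
  field_simp

lemma qBinom_zero (q : ℝ) (a : ℕ) : qBinom q a 0 = 1 := by simp [qBinom]

lemma qBinom_overflow (q : ℝ) (s : ℕ) : qBinom q s (s + 1) = 0 := by
  simp [qBinom]

lemma qPoch_succ (q a : ℝ) (k : ℕ) : qPoch q a (k + 1) = qPoch q a k * (1 - a * q ^ k) :=
  Finset.prod_range_succ _ _

lemma qPoch_zero (q a : ℝ) : qPoch q a 0 = 1 := rfl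

lemma key (q : ℝ) (hq : 1 < q) (a b : ℝ) (s : ℕ) :
    qPoch q (a * b) s = ∑ j ∈ Finset.range (s + 1),
      qBinom q s j * a ^ (s - j) * qPoch q a j * qPoch q b (s - j) := by
  induction s with
  | zero => simp [qPoch, qBinom]
  | succ s ih =>
    have hstep : qPoch q (a * b) (s + 1) = (∑ j ∈ Finset.range (s + 1),
        qBinom q s j * a ^ (s - j) * qPoch q a j * qPoch q b (s - j)) * (1 - a * b * q ^ s) := by
      rw [← ih]; exact Finset.prod_range_succ _ _
    rw [hstep, Finset.sum_mul]
    have hterm : ∀ j ∈ Finset.range (s + 1),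
        qBinom q s j * a ^ (s - j) * qPoch q a j * qPoch q b (s - j) * (1 - a * b * q ^ s)
        = q ^ j * qBinom q s j * a ^ (s + 1 - j) * qPoch q a j * qPoch q b (s + 1 - j)
          + qBinom q s j * a ^ (s - j) * qPoch q a (j + 1) * qPoch q b (s - j) := by
      intro j hj
      have hjs : j ≤ s := Nat.lt_succ_iff.mp (Finset.mem_range.mp hj)
      have e1 : s + 1 - j = (s - j) + 1 := by omega
      have e2 : a ^ (s + 1 - j) = a * a ^ (s - j) := by rw [e1, pow_succ]; ring
      have e3 : qPoch q b (s + 1 - j) = qPoch q b (s - j) * (1 - b * q ^ (s - j)) := by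
        rw [e1]; exact Finset.prod_range_succ _ _
      have e4 : qPoch q a (j + 1) = qPoch q a j * (1 - a * q ^ j) := Finset.prod_range_succ _ _
      have e5 : q ^ j * q ^ (s - j) = q ^ s := by rw [← pow_add]; congr 1; omega
      rw [e2, e3, e4]
      linear_combination qBinom q s j * a ^ (s - j) * qPoch q a j * qPoch q b (s - j) * a * b * e5
    rw [Finset.sum_congr rfl hterm, Finset.sum_add_distrib]
    -- RHS: peel off the j = 0 term
    rw [Finset.sum_range_succ' (fun j => qBinom q (s+1) j * a ^ (s+1-j) * qPoch q a j
      * qPoch q b (s+1-j)) (s+1)]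
    have hF : ∀ j ∈ Finset.range (s + 1),
        qBinom q (s+1) (j+1) * a ^ (s+1-(j+1)) * qPoch q a (j+1) * qPoch q b (s+1-(j+1))
        = q ^ (j+1) * qBinom q s (j+1) * a ^ (s-j) * qPoch q a (j+1) * qPoch q b (s-j)
          + qBinom q s j * a ^ (s-j) * qPoch q a (j+1) * qPoch q b (s-j) := by
      intro j hj
      have e : s + 1 - (j + 1) = s - j := by omega
      rw [e, qBinom_pascal q hq]
      ring
    rw [Finset.sum_congr rfl hF, Finset.sum_add_distrib]
    have hF0 : qBinom q (s+1) 0 * a ^ (s+1-0) * qPoch q a 0 * qPoch q b (s+1-0)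
        = a ^ (s+1) * qPoch q b (s+1) := by
      simp [qBinom_zero, qPoch_zero]
    rw [hF0]
    -- Now show first sums match: A = A' + a^(s+1) * Pb(s+1)
    have hA : ∑ j ∈ Finset.range (s + 1),
        q ^ j * qBinom q s j * a ^ (s+1-j) * qPoch q a j * qPoch q b (s+1-j)
        = (∑ j ∈ Finset.range (s + 1),
            q ^ (j+1) * qBinom q s (j+1) * a ^ (s-j) * qPoch q a (j+1) * qPoch q b (s-j))
          + a ^ (s+1) * qPoch q b (s+1) := by
      rw [Finset.sum_range_succ' (fun j => q ^ j * qBinom q s j * a ^ (s+1-j) * qPoch q a j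
        * qPoch q b (s+1-j)) s]
      rw [Finset.sum_range_succ (fun j => q ^ (j+1) * qBinom q s (j+1) * a ^ (s-j)
        * qPoch q a (j+1) * qPoch q b (s-j)) s]
      rw [qBinom_overflow]
      have : ∀ j ∈ Finset.range s,
          q ^ (j+1) * qBinom q s (j+1) * a ^ (s+1-(j+1)) * qPoch q a (j+1) * qPoch q b (s+1-(j+1))
          = q ^ (j+1) * qBinom q s (j+1) * a ^ (s-j) * qPoch q a (j+1) * qPoch q b (s-j) := by
        intro j hj
        have e : s + 1 - (j + 1) = s - j := by omega
        rw [e]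
      rw [Finset.sum_congr rfl this]
      simp [qBinom_zero, qPoch_zero]
    rw [hA]
    ring

theorem stmt19 (n r s : ℕ) (hn : 0 < n) (hr : 0 < r) (hs : 0 < s) (hdvd : s ∣ r * n)
    (m : ℕ) (hm : m = r * n / s) (q : ℝ) (hq : 1 < q) :
    qPoch q (q ^ (-(n : ℤ))) s =
      q ^ (-((n : ℤ) * r)) *
        ∑ j ∈ Finset.range (s + 1),
          q ^ ((j : ℤ) * m) * qBinom q s j *
            qPoch q (q ^ (-(m : ℤ))) j * qPoch q (q ^ ((m : ℤ) - n)) (s - j) := by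
  have hq0 : q ≠ 0 := by linarith
  have hmsN : m * s = r * n := by
    rw [hm]; exact Nat.div_mul_cancel hdvd
  have hms : (m : ℤ) * s = (n : ℤ) * r := by
    have := congrArg (Nat.cast : ℕ → ℤ) hmsN
    push_cast at this
    linarith
  have hab : (q ^ (-(m : ℤ))) * (q ^ ((m : ℤ) - n)) = q ^ (-(n : ℤ)) := by
    rw [← zpow_add₀ hq0]; congr 1; ring
  rw [← hab, key q hq _ _ s, Finset.mul_sum]
  apply Finset.sum_congr rfl
  intro j hj
  have hjs : j ≤ s := Nat.lt_succ_iff.mp (Finset.mem_range.mp hj)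
  have e : (q ^ (-(m : ℤ))) ^ (s - j) = q ^ (-((n : ℤ) * r)) * q ^ ((j : ℤ) * m) := by
    rw [← zpow_natCast (q ^ (-(m : ℤ))), ← zpow_mul, ← zpow_add₀ hq0]
    congr 1
    push_cast [Nat.cast_sub hjs]
    linear_combination -hms
  rw [e]
  ring
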